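/- arXiv:2602.17197 — 5 statements merged into one kernel-verified Lean document; each statement's English description precedes it below -/
import Mathlib

section
/- Let A be a finite-dimensional k-algebra and e an idempotent. A module M with Hom_A(eA, M) = 0 is Ext-projective in the subcategory (eA)^⊥ (i.e., Ext¹_A(M, X) = 0 for all X ∈ (eA)^⊥) if and only if M ≅ P/PeA for some finitely generated projective A-module P. -/
/-!
Since `Hom_A(eA, X) ≅ Xe`, the subcategory `(eA)^⊥` consists of the modules killed by `e`.

If `P` is projective, a map `P/PeA → M` lifts along `Y → M` by projectivity of `P`, and the lift
`h` kills `PeA`: `h(pe)` lies in `X` and equals `h(pe)e ∈ Xe = 0`. So `P/PeA` is Ext-projective.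

Conversely, since `A` is artinian, `M` has a minimal presentation: a direct summand `P` of a free
module mapping onto `M` such that no proper direct summand of `P` does. By Fitting's lemma every
endomorphism `h` of `P` over `M` is then surjective, and by projectivity of `P` no proper submodule
of `P` maps onto `M`. The kernel of `P/PeA → M` is killed by `e`, so Ext-projectivity gives a
section `s`; the preimage in `P` of the image of `s` maps onto `M`, hence is all of `P`, and `s` is
an isomorphism `M ≅ P/PeA`.
-/

open MulOpposite Function Submodule

universe u

theorem forall_linearMap_span_singleton_eq_zero_iff {A : Type*} [Ring A] {e : A}
    (he : IsIdempotentElem e) {W : Type*} [AddCommGroup W] [Module Aᵐᵒᵖ W] :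
    (∀ g : span Aᵐᵒᵖ ({e} : Set A) →ₗ[Aᵐᵒᵖ] W, g = 0) ↔ ∀ w : W, op e • w = 0 := by
  constructor
  · intro h w
    let φ : span Aᵐᵒᵖ ({e} : Set A) →ₗ[Aᵐᵒᵖ] W :=
      { toFun x := op (x : A) • w
        map_add' x y := by simp [add_smul]
        map_smul' r x := by simp [mul_smul] }
    simpa [φ] using LinearMap.congr_fun (h φ) ⟨e, mem_span_singleton_self e⟩
  · intro h g
    refine LinearMap.ext_on span_span_coe_preimage fun x (hx : (x : A) = e) => ?_
    have hex : op e • x = x := Subtype.ext (by simp [hx, he.eq])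
    rw [← hex, map_smul, h, LinearMap.zero_apply]

section QuotientTrace

variable {R : Type*} [Ring R] {ε : R} {P : Type*} [AddCommGroup P] [Module R P]

theorem smul_quotient_span_range_smul_eq_zero
    (x : P ⧸ span R (Set.range fun p : P => ε • p)) : ε • x = 0 := by
  induction x using Submodule.Quotient.induction_on with
  | H p => rw [← Quotient.mk_smul, Quotient.mk_eq_zero]; exact subset_span ⟨p, rfl⟩

variable (ε) in
def LinearEquiv.quotientSpanRangeSmul {Q : Type*} [AddCommGroup Q] [Module R Q] (μ : P ≃ₗ[R] Q) :
    (P ⧸ span R (Set.range fun p : P => ε • p)) ≃ₗ[R] Q ⧸ span R (Set.range fun q : Q => ε • q) :=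
  Quotient.equiv _ _ μ <| by
    rw [map_span, ← Set.range_comp]
    congr 1
    exact (congrArg Set.range (funext fun p => map_smul μ ε p)).trans
      (μ.surjective.range_comp (ε • ·))

theorem quotient_span_range_smul_lifting_property (hε : IsIdempotentElem ε)
    [Module.Projective R P] {X Y M : Type*} [AddCommGroup X] [Module R X] [AddCommGroup Y]
    [Module R Y] [AddCommGroup M] [Module R M] {f : X →ₗ[R] Y} {g : Y →ₗ[R] M}
    (hX : ∀ x : X, ε • x = 0) (hfg : Exact f g) (hg : Surjective g)
    (φ : (P ⧸ span R (Set.range fun p : P => ε • p)) →ₗ[R] M) : ∃ ψ, g ∘ₗ ψ = φ := by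
  obtain ⟨h, hh⟩ := Module.projective_lifting_property g (φ ∘ₗ mkQ _) hg
  have hker : span R (Set.range fun p : P => ε • p) ≤ LinearMap.ker h := by
    rw [span_le]
    rintro _ ⟨p, rfl⟩
    obtain ⟨x, hx⟩ : h (ε • p) ∈ Set.range f := by
      refine (hfg _).1 ?_
      rw [← LinearMap.comp_apply, hh, LinearMap.comp_apply, mkQ_apply,
        (Quotient.mk_eq_zero _).2 (subset_span (Set.mem_range_self p)), map_zero]
    calc h (ε • p) = ε • h (ε • p) := by rw [← map_smul, smul_smul, hε.eq]
      _ = 0 := by rw [← hx, ← map_smul, hX, map_zero]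
  exact ⟨liftQ _ h hker, linearMap_qext _ (by rw [LinearMap.comp_assoc, liftQ_mkQ, hh])⟩

end QuotientTrace

section SummandMinimal

variable {R L M : Type*} [Ring R] [AddCommGroup L] [Module R L] [AddCommGroup M] [Module R M]

def LinearMap.IsSummandMinimal (π : L →ₗ[R] M) : Prop :=
  ∀ U : Submodule R L, (∃ V, IsCompl U V) → U.map π = ⊤ → U = ⊤

theorem LinearMap.IsSummandMinimal.surjective_of_comp_eq [IsNoetherian R L] [IsArtinian R L]
    {π : L →ₗ[R] M} (hmin : π.IsSummandMinimal) (hπ : Surjective π) {h : Module.End R L}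
    (hh : π ∘ₗ h = π) : Surjective h := by
  have hpow : ∀ k, π ∘ₗ h ^ k = π := by
    intro k
    induction k with
    | zero => rfl
    | succ k ih => rw [pow_succ, Module.End.mul_eq_comp, ← LinearMap.comp_assoc, ih, hh]
  obtain ⟨n, hn⟩ := Filter.eventually_atTop.1 h.eventually_isCompl_ker_pow_range_pow
  have hrange : LinearMap.range (h ^ (n + 1)) = ⊤ :=
    hmin _ ⟨_, (hn (n + 1) n.le_succ).symm⟩
      (by rw [← LinearMap.range_comp, hpow, LinearMap.range_eq_top.2 hπ])
  rw [pow_succ', LinearMap.range_eq_top, Module.End.coe_mul] at hrange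
  exact hrange.of_comp

theorem LinearMap.IsSummandMinimal.eq_top_of_map_eq_top [Module.Projective R L]
    [IsNoetherian R L] [IsArtinian R L] {π : L →ₗ[R] M} (hmin : π.IsSummandMinimal)
    (hπ : Surjective π) {N : Submodule R L} (hN : N.map π = ⊤) : N = ⊤ := by
  obtain ⟨h, hh⟩ := Module.projective_lifting_property (π ∘ₗ N.subtype) π
    (by rw [← LinearMap.range_eq_top, LinearMap.range_comp, range_subtype, hN])
  have hsurj : Surjective (N.subtype ∘ₗ h) := hmin.surjective_of_comp_eq hπ hh
  refine eq_top_iff.2 fun x _ => ?_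
  obtain ⟨y, rfl⟩ := hsurj x
  exact (h y).2

theorem LinearMap.IsSummandMinimal.surjective_of_leftInverse [Module.Projective R L]
    [IsNoetherian R L] [IsArtinian R L] {Q : Type*} [AddCommGroup Q] [Module R Q]
    {q : L →ₗ[R] Q} {g : Q →ₗ[R] M} (hmin : (g ∘ₗ q).IsSummandMinimal) (hq : Surjective q)
    {s : M →ₗ[R] Q} (hs : LeftInverse g s) : Surjective s := by
  have htop : (LinearMap.range s).comap q = ⊤ := by
    refine hmin.eq_top_of_map_eq_top (hs.surjective.comp hq) (eq_top_iff.2 fun m _ => ?_)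
    obtain ⟨p, hp⟩ := hq (s m)
    exact ⟨p, ⟨m, hp.symm⟩, by rw [LinearMap.comp_apply, hp, hs m]⟩
  intro x
  obtain ⟨p, rfl⟩ := hq x
  exact (htop ▸ mem_top : p ∈ (LinearMap.range s).comap q)

theorem LinearMap.exists_isSummandMinimal_restrict {F : Type*} [AddCommGroup F] [Module R F]
    [IsArtinian R F] {f : F →ₗ[R] M} (hf : Surjective f) :
    ∃ L : Submodule R F, (∃ C, IsCompl L C) ∧ Surjective (f ∘ₗ L.subtype) ∧
      (f ∘ₗ L.subtype).IsSummandMinimal := by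
  obtain ⟨L, ⟨hLf, hLC⟩, hLmin⟩ := IsArtinian.set_has_minimal
    {L : Submodule R F | L.map f = ⊤ ∧ ∃ C, IsCompl L C}
    ⟨⊤, by rw [Submodule.map_top, LinearMap.range_eq_top.2 hf], ⊥, isCompl_top_bot⟩
  have hLf' : Surjective (f ∘ₗ L.subtype) := by
    rwa [← LinearMap.range_eq_top, LinearMap.range_comp, range_subtype]
  refine ⟨L, hLC, hLf', fun U ⟨V, hUV⟩ hU => ?_⟩
  obtain ⟨C, hC⟩ := hLC
  -- A summand of the summand `L` is a summand of `F`, so minimality of `L` applies to it.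
  have hsum : U.map L.subtype ⊔ V.map L.subtype = L := by
    rw [← Submodule.map_sup, hUV.sup_eq_top, Submodule.map_top, range_subtype]
  have hUL : U.map L.subtype = L := (map_subtype_le L U).eq_of_not_lt <| hLmin _
    ⟨by rwa [← Submodule.map_comp], _,
      (disjoint_map L.injective_subtype hUV.disjoint).isCompl_sup_right_of_isCompl_sup_left
        (hsum ▸ hC)⟩
  exact map_injective_of_injective L.injective_subtype
    (by rw [hUL, Submodule.map_top, range_subtype])

end SummandMinimal

theorem exists_projective_quotient_equiv_of_splits {R : Type u} [Ring R] [IsArtinianRing R]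
    (ε : R) {M : Type*} [AddCommGroup M] [Module R M] [Module.Finite R M] (hM : ∀ m : M, ε • m = 0)
    (hsplit : ∀ (Y : Type u) [AddCommGroup Y] [Module R Y] (g : Y →ₗ[R] M), Surjective g →
      Module.Finite R (LinearMap.ker g) → (∀ y : LinearMap.ker g, ε • y = 0) →
      ∃ s : M →ₗ[R] Y, g ∘ₗ s = LinearMap.id) :
    ∃ (n : ℕ) (L : Submodule R (Fin n → R)), Module.Projective R L ∧ Module.Finite R L ∧
      Nonempty (M ≃ₗ[R] L ⧸ span R (Set.range fun p : L => ε • p)) := by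
  obtain ⟨n, f, hf⟩ := Module.Finite.exists_fin' R M
  obtain ⟨L, ⟨C, hC⟩, hπ, hmin⟩ := LinearMap.exists_isSummandMinimal_restrict hf
  have : Module.Projective R L :=
    .of_split L.subtype (L.projectionOnto C hC) (projectionOnto_comp_subtype hC)
  set T := span R (Set.range fun p : L => ε • p)
  have hT : T ≤ LinearMap.ker (f ∘ₗ L.subtype) := by
    rw [span_le]
    rintro _ ⟨p, rfl⟩
    simp [hM]
  set g := T.liftQ _ hT
  have hg : g ∘ₗ T.mkQ = f ∘ₗ L.subtype := T.liftQ_mkQ _ hT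
  obtain ⟨s, hs⟩ := hsplit _ g (hπ.of_comp (g := T.mkQ)) inferInstance
    fun y => Subtype.ext (smul_quotient_span_range_smul_eq_zero (y : L ⧸ T))
  have hs' : LeftInverse g s := LinearMap.congr_fun hs
  have hs_surj : Surjective s := by
    rw [← hg] at hmin
    exact hmin.surjective_of_leftInverse T.mkQ_surjective hs'
  exact ⟨n, L, inferInstance, inferInstance, ⟨.ofBijective s ⟨hs'.injective, hs_surj⟩⟩⟩

/-- Let `A` be a finite-dimensional `k`-algebra and `e` an idempotent.  A
finitely generated right `A`-module `M` with `Hom_A(eA, M) = 0` is Ext-projective in the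
subcategory `(eA)^⊥` (every short exact sequence `0 → X → Y → M → 0` with `X ∈ (eA)^⊥` splits)
if and only if `M ≅ P/PeA` for some finitely generated projective right `A`-module `P`. -/
theorem stmt3 (k A : Type) [Field k] [Ring A] [Algebra k A] [FiniteDimensional k A]
    (e : A) (he : e * e = e)
    (M : Type) [AddCommGroup M] [Module Aᵐᵒᵖ M] [Module.Finite Aᵐᵒᵖ M]
    (hM : ∀ g : (Submodule.span Aᵐᵒᵖ ({e} : Set A)) →ₗ[Aᵐᵒᵖ] M, g = 0) :
    (∀ (X : Type) [AddCommGroup X] [Module Aᵐᵒᵖ X], Module.Finite Aᵐᵒᵖ X →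
      (∀ g : (Submodule.span Aᵐᵒᵖ ({e} : Set A)) →ₗ[Aᵐᵒᵖ] X, g = 0) →
      ∀ (Y : Type) [AddCommGroup Y] [Module Aᵐᵒᵖ Y]
        (f : X →ₗ[Aᵐᵒᵖ] Y) (g : Y →ₗ[Aᵐᵒᵖ] M),
        Function.Injective f → Function.Surjective g → Function.Exact f g →
        ∃ s : M →ₗ[Aᵐᵒᵖ] Y, g ∘ₗ s = LinearMap.id) ↔
    (∃ P : ModuleCat Aᵐᵒᵖ, Module.Projective Aᵐᵒᵖ P ∧ Module.Finite Aᵐᵒᵖ P ∧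
      Nonempty (M ≃ₗ[Aᵐᵒᵖ]
        (P ⧸ Submodule.span Aᵐᵒᵖ (Set.range fun p : P => (op e) • p)))) := by
  have hom_eq_zero_iff := @forall_linearMap_span_singleton_eq_zero_iff _ _ _ he
  have he' : IsIdempotentElem (op e) := congrArg op he
  have : IsArtinianRing Aᵐᵒᵖ := isArtinian_of_tower k inferInstance
  constructor
  · intro hsplit
    obtain ⟨n, L, hLproj, hLfin, ⟨φ⟩⟩ := exists_projective_quotient_equiv_of_splits (op e)
      (hom_eq_zero_iff.1 hM) fun Y _ _ g hg hfin hker => hsplit _ hfin (hom_eq_zero_iff.2 hker)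
        Y _ g (LinearMap.ker g).injective_subtype hg (LinearMap.exact_subtype_ker_map g)
    let μ : L ≃ₗ[Aᵐᵒᵖ] ULift L := ULift.moduleEquiv.symm
    exact ⟨.of _ (ULift L), .of_equiv μ, .equiv μ, ⟨φ.trans (μ.quotientSpanRangeSmul _)⟩⟩
  · rintro ⟨P, _, -, ⟨φ⟩⟩ X _ _ - hX Y _ _ f g - hg hfg
    obtain ⟨ψ, hψ⟩ := quotient_span_range_smul_lifting_property he' (hom_eq_zero_iff.1 hX)
      hfg hg φ.symm.toLinearMap
    exact ⟨ψ ∘ₗ φ.toLinearMap, by rw [← LinearMap.comp_assoc, hψ, LinearEquiv.symm_comp]⟩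
end

section
/- Let A be a finite-dimensional k-algebra, e an idempotent, and M an indecomposable finitely generated right A-module with Hom_A(eA, M) = 0. If the projective dimension of M as an A-module is at most 1, then the projective dimension of M as an A/AeA-module is at most 1. -/
open MulOpposite

/-- `pdLE R d M` : the `R`-module `M` has projective dimension at most `d`. -/
def pdLE (R : Type) [Ring R] : ℕ → (M : Type) → [_inst : AddCommGroup M] → [_inst2 : Module R M] → Prop
  | 0, M, _, _ => Module.Projective R M
  | d + 1, M, _, _ =>
    ∃ (P : ModuleCat R) (f : P →ₗ[R] M), Module.Projective R P ∧
      Function.Surjective f ∧ pdLE R d (LinearMap.ker f)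

/-!
Since `Hom_A(eA, M) = 0`, evaluating `a ↦ m a` on `eA` gives `M e = 0`, so `M` is annihilated by
`I = AeA = ker π` and is a `B`-module. Take `0 → K → P → M → 0` with `P`, `K` projective over `A`.
Reducing modulo `I`, the modules `P / P I` and `K / K I` are projective over `B = A / I`, and
`0 → K / K I → P / P I → M → 0` stays exact: as `e` is idempotent, `I = I²`, hence
`P I = P I² ⊆ K I` because `P I ⊆ K`.
-/

open Module Submodule Function
open scoped Pointwise

section Semilinear

variable {R S : Type*} [Ring R] [Ring S] {ρ : R →+* S}
variable {X Y Z W : Type*} [AddCommGroup X] [Module R X] [AddCommGroup Y] [Module S Y]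
  [AddCommGroup Z] [Module S Z] [AddCommGroup W] [Module S W]

theorem Module.projective_lifting_property_semilinear [Projective R X] (f : Z →ₗ[S] W)
    (g : X →ₛₗ[ρ] W) (hf : Surjective f) : ∃ h : X →ₛₗ[ρ] Z, f.comp h = g := by
  obtain ⟨s, hs⟩ := ‹Projective R X›
  refine ⟨(Finsupp.lsum ℕ fun x ↦
    (LinearMap.toSpanSingleton S Z (surjInv hf (g x))).comp ρ.toSemilinearMap).comp s, ?_⟩
  ext x
  conv_rhs => rw [← hs x]
  simp [Finsupp.linearCombination_apply, surjInv_eq hf, map_finsuppSum]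

theorem LinearMap.exists_comp_eq_of_ker_le (hρ : Surjective ρ) (q : X →ₛₗ[ρ] Y)
    (hq : Surjective q) (φ : X →ₛₗ[ρ] Z) (h : ker q ≤ ker φ) :
    ∃ ψ : Y →ₗ[S] Z, ψ.comp q = φ := by
  have hφ : ∀ x x', q x = q x' → φ x = φ x' := fun x x' hxx' ↦
    sub_eq_zero.mp (by rw [← map_sub]; exact h (by rw [mem_ker, map_sub, hxx', sub_self]))
  refine ⟨{ toFun := fun y ↦ φ (surjInv hq y), map_add' := fun y y' ↦ ?_, map_smul' := ?_ }, ?_⟩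
  · rw [← map_add]; exact hφ _ _ (by simp [surjInv_eq hq])
  · rw [hρ.forall]; intro r y
    simp only [RingHom.id_apply, ← φ.map_smulₛₗ]
    exact hφ _ _ (by simp [surjInv_eq hq])
  · ext x; exact hφ _ _ (surjInv_eq hq _)

theorem LinearMap.ringHom_ker_smul_top_le_ker (φ : X →ₛₗ[ρ] Z) :
    RingHom.ker ρ • (⊤ : Submodule R X) ≤ LinearMap.ker φ :=
  smul_le.mpr fun r hr x _ ↦ by
    rw [LinearMap.mem_ker, φ.map_smulₛₗ, RingHom.mem_ker.mp hr, zero_smul]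

theorem Module.Projective.of_surjective_semilinear (hρ : Surjective ρ) [Projective R X]
    (q : X →ₛₗ[ρ] Y) (hq : Surjective q) (hker : LinearMap.ker q ≤ RingHom.ker ρ • ⊤) :
    Projective S Y :=
  .of_lifting_property'' fun f hf ↦ by
    obtain ⟨h, hh⟩ := projective_lifting_property_semilinear f q hf
    obtain ⟨ψ, hψ⟩ := LinearMap.exists_comp_eq_of_ker_le hρ q hq h
      (hker.trans h.ringHom_ker_smul_top_le_ker)
    refine ⟨ψ, LinearMap.ext <| hq.forall.mpr fun x ↦ ?_⟩
    simpa [← hψ] using LinearMap.congr_fun hh x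

end Semilinear

section Torsion

variable {R S : Type*} [Ring R] [Ring S] {ρ : R →+* S} (hρ : Surjective ρ)
variable {X : Type*} [AddCommGroup X] [Module R X]

noncomputable abbrev Module.IsTorsionBySet.moduleOfSurjective
    (hX : IsTorsionBySet R X (RingHom.ker ρ)) : Module S X :=
  letI := hX.module
  Module.compHom X (RingHom.quotientKerEquivOfSurjective hρ).symm.toRingHom

theorem Module.IsTorsionBySet.moduleOfSurjective_smul (hX : IsTorsionBySet R X (RingHom.ker ρ))
    (r : R) (x : X) :
    letI := hX.moduleOfSurjective hρ
    ρ r • x = r • x := by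
  let := hX.module
  show (RingHom.quotientKerEquivOfSurjective hρ).symm (ρ r) • x = r • x
  rw [RingHom.quotientKerEquivOfSurjective_symm_apply]
  rfl

end Torsion

theorem pdLE_one_of_isIdempotentElem_ker {R S : Type} [Ring R] [Ring S] {ρ : R →+* S}
    (hρ : Surjective ρ) (hI : IsIdempotentElem (RingHom.ker ρ)) {M : Type} [AddCommGroup M]
    [Module R M] [Module S M] (hM : ∀ (r : R) (m : M), ρ r • m = r • m) (hpd : pdLE R 1 M) :
    pdLE S 1 M := by
  obtain ⟨P, f, hP, hf, hK⟩ := hpd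
  set I := RingHom.ker ρ
  let PI : Submodule R P := I • ⊤
  have hPI : IsTorsionBySet R (P ⧸ PI) I := isTorsionBySet_quotient_ideal_smul P I
  let := hPI.moduleOfSurjective hρ
  let q : P →ₛₗ[ρ] P ⧸ PI :=
    { PI.mkQ with map_smul' := fun r p ↦ (hPI.moduleOfSurjective_smul hρ r (PI.mkQ p)).symm }
  have hq : LinearMap.ker q = PI := PI.ker_mkQ
  let fρ : P →ₛₗ[ρ] M := { f with map_smul' := fun r p ↦ (f.map_smul r p).trans (hM r _).symm }
  obtain ⟨g, hg⟩ := LinearMap.exists_comp_eq_of_ker_le hρ q PI.mkQ_surjective fρ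
    (hq.trans_le fρ.ringHom_ker_smul_top_le_ker)
  have hgq : ∀ p, g (q p) = f p := LinearMap.congr_fun hg
  have hPIK : PI ≤ I • LinearMap.ker f := calc
    PI = I • I • ⊤ := by rw [← Submodule.mul_smul, hI.eq]
    _ ≤ I • LinearMap.ker f := smul_mono_right _ fρ.ringHom_ker_smul_top_le_ker
  let qK : LinearMap.ker f →ₛₗ[ρ] LinearMap.ker g :=
    (q.comp (LinearMap.ker f).subtype).codRestrict _ fun k ↦ by simp [hgq]
  refine ⟨.of S (P ⧸ PI), g, .of_surjective_semilinear hρ q PI.mkQ_surjective hq.le, ?_, ?_⟩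
  · exact fun m ↦ let ⟨p, hp⟩ := hf m; ⟨q p, (hgq p).trans hp⟩
  have : Projective R (LinearMap.ker f) := hK
  refine .of_surjective_semilinear hρ qK (fun ⟨y, hy⟩ ↦ ?_) fun k hk ↦ ?_
  · obtain ⟨p, rfl⟩ := PI.mkQ_surjective y
    have hp : f p = 0 := (hgq p).symm.trans hy
    exact ⟨⟨p, hp⟩, rfl⟩
  · have hkPI : (k : P) ∈ LinearMap.ker q := congrArg Subtype.val hk
    exact (mem_smul_top_iff _ _ k).mpr (hPIK (hq ▸ hkPI))

section Opposite

variable {A : Type*} [Ring A] {e : A}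

theorem op_smul_eq_zero_of_forall_span_singleton_hom_eq_zero {M : Type*} [AddCommGroup M]
    [Module Aᵐᵒᵖ M] (hperp : ∀ g : span Aᵐᵒᵖ ({e} : Set A) →ₗ[Aᵐᵒᵖ] M, g = 0) (m : M) :
    op e • m = 0 := by
  let g : A →ₗ[Aᵐᵒᵖ] M :=
    (LinearMap.toSpanSingleton Aᵐᵒᵖ M m).comp (opLinearEquiv Aᵐᵒᵖ).toLinearMap
  exact LinearMap.congr_fun (hperp (g.comp (span Aᵐᵒᵖ {e}).subtype)) ⟨e, mem_span_singleton_self e⟩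

theorem op_smul_eq_zero_of_mem_closure {M : Type*} [AddCommGroup M] [Module Aᵐᵒᵖ M]
    (hMe : ∀ m : M, op e • m = 0) {x : A}
    (hx : x ∈ AddSubgroup.closure {y : A | ∃ a b : A, y = a * e * b}) (m : M) : op x • m = 0 := by
  induction hx using AddSubgroup.closure_induction generalizing m with
  | mem y hy =>
    obtain ⟨a, b, rfl⟩ := hy
    rw [op_mul, op_mul, mul_smul, mul_smul, hMe, smul_zero]
  | zero => rw [op_zero, zero_smul]
  | add y z _ _ hy hz => rw [op_add, add_smul, hy, hz, add_zero]
  | neg y _ hy => rw [op_neg, neg_smul, hy, neg_zero]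

theorem op_mem_ker_mul_ker_of_mem_closure {B : Type*} [Ring B] {π : A →+* B}
    (he : IsIdempotentElem e) (hπe : π e = 0) {x : A}
    (hx : x ∈ AddSubgroup.closure {y : A | ∃ a b : A, y = a * e * b}) :
    op x ∈ RingHom.ker (RingHom.op π) * RingHom.ker (RingHom.op π) := by
  induction hx using AddSubgroup.closure_induction with
  | mem y hy =>
    obtain ⟨a, b, rfl⟩ := hy
    have hfactor : a * e * b = (a * e) * (e * b) := by rw [← mul_assoc, mul_assoc a e e, he.eq]
    rw [hfactor, op_mul]
    exact Ideal.mul_mem_mul (by simp [hπe]) (by simp [hπe])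
  | zero => exact zero_mem _
  | add y z _ _ hy hz => rw [op_add]; exact add_mem hy hz
  | neg y _ hy => rw [op_neg]; exact neg_mem hy

end Opposite

theorem stmt4_general (A B : Type) [Ring A]
    [Ring B] (π : A →+* B) (hπ : Function.Surjective π)
    (e : A) (he : e * e = e)
    (hker : ∀ x : A, π x = 0 ↔ x ∈ AddSubgroup.closure {y : A | ∃ a b : A, y = a * e * b})
    (M : Type) [AddCommGroup M] [Module Aᵐᵒᵖ M]
    -- `Hom_A(eA, M) = 0`
    (hperp : ∀ g : (Submodule.span Aᵐᵒᵖ ({e} : Set A)) →ₗ[Aᵐᵒᵖ] M, g = 0)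
    -- `pd_A M ≤ 1`
    (hpd : pdLE Aᵐᵒᵖ 1 M) :
    ∃ (N : ModuleCat Bᵐᵒᵖ) (φ : M ≃+ N),
      (∀ (a : A) (m : M), φ ((op a) • m) = (op (π a)) • φ m) ∧
      pdLE Bᵐᵒᵖ 1 N := by
  have hρ : Surjective (RingHom.op π) := fun b ↦
    let ⟨a, ha⟩ := hπ b.unop; ⟨op a, congrArg op ha⟩
  have hπe : π e = 0 := (hker e).mpr (AddSubgroup.subset_closure ⟨1, 1, by simp⟩)
  have hM : IsTorsionBySet Aᵐᵒᵖ M (RingHom.ker (RingHom.op π)) := fun m ⟨r, hr⟩ ↦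
    op_smul_eq_zero_of_mem_closure (op_smul_eq_zero_of_forall_span_singleton_hom_eq_zero hperp)
      ((hker r.unop).mp (by simpa using hr)) m
  have hI : IsIdempotentElem (RingHom.ker (RingHom.op π)) :=
    le_antisymm Ideal.mul_le_left fun r hr ↦
      op_mem_ker_mul_ker_of_mem_closure he hπe ((hker r.unop).mp (by simpa using hr))
  let := hM.moduleOfSurjective hρ
  exact ⟨.of _ M, .refl M, fun a m ↦ (hM.moduleOfSurjective_smul hρ (op a) m).symm,
    pdLE_one_of_isIdempotentElem_ker hρ hI (hM.moduleOfSurjective_smul hρ) hpd⟩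

/-- Let `A` be a finite-dimensional `k`-algebra, `e` an idempotent and
`B = A/AeA` (encoded as a surjective ring homomorphism `π : A → B` whose kernel is the
two-sided ideal generated by `e`).  If `M` is an indecomposable finitely generated right
`A`-module with `Hom_A(eA, M) = 0` and `pd_A M ≤ 1`, then `M`, viewed as a right `B`-module
(i.e. any right `B`-module `N` isomorphic to `M` compatibly with `π`), has `pd_B N ≤ 1`. -/
theorem stmt4 (k A B : Type) [Field k] [Ring A] [Algebra k A] [FiniteDimensional k A]
    [Ring B] (π : A →+* B) (hπ : Function.Surjective π)
    (e : A) (he : e * e = e)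
    (hker : ∀ x : A, π x = 0 ↔ x ∈ AddSubgroup.closure {y : A | ∃ a b : A, y = a * e * b})
    (M : Type) [AddCommGroup M] [Module Aᵐᵒᵖ M] [Module.Finite Aᵐᵒᵖ M]
    -- `M` is indecomposable
    (hnt : Nontrivial M)
    (hindec : ∀ f : M →ₗ[Aᵐᵒᵖ] M, f ∘ₗ f = f → f = 0 ∨ f = LinearMap.id)
    -- `Hom_A(eA, M) = 0`
    (hperp : ∀ g : (Submodule.span Aᵐᵒᵖ ({e} : Set A)) →ₗ[Aᵐᵒᵖ] M, g = 0)
    -- `pd_A M ≤ 1`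
    (hpd : pdLE Aᵐᵒᵖ 1 M) :
    ∃ (N : ModuleCat Bᵐᵒᵖ) (φ : M ≃+ N),
      (∀ (a : A) (m : M), φ ((op a) • m) = (op (π a)) • φ m) ∧
      pdLE Bᵐᵒᵖ 1 N :=
  stmt4_general A B π hπ e he hker M hperp hpd
end

section
/- Let A be a finite-dimensional k-algebra such that every indecomposable finitely generated right A-module has projective dimension at most 1 or injective dimension at most 1 (A is shod). Then for any idempotent e ∈ A, the quotient algebra A/AeA is also shod. -/
/-!
Let `J` be the kernel of `A → B`. Being generated by an idempotent, `J = AeA` satisfies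
`J² = J`. View a `B`-module `M` as an `A`-module.

If `0 → K → P → M → 0` with `P`, `K` projective, then `J² = J` and `JP ⊆ K` give `JP = JK`, so
`0 → K/JK → P/JP → M → 0` is exact, and `P/JP`, `K/JK` are projective over `B = A/J`.

If `0 → M → I → C → 0` with `I`, `C` injective, write `X_J = {x ∈ X | Jx = 0}`; then `I_J` and
`C_J` are injective over `B`. An `x ∈ I` with `Jx ⊆ M` satisfies `Jx = J²x ⊆ JM = 0`, so
`0 → M → I_J → C_J → 0` is exact.
-/

open MulOpposite

/-- `idLE R d M` : the `R`-module `M` has injective dimension at most `d`. -/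
def idLE (R : Type) [Ring R] : ℕ → (M : Type) → [_inst : AddCommGroup M] → [_inst2 : Module R M] → Prop
  | 0, M, _, _ => Module.Injective R M
  | d + 1, M, _, _ =>
    ∃ (I : ModuleCat R) (f : M →ₗ[R] I), Module.Injective R I ∧
      Function.Injective f ∧ idLE R d (I ⧸ LinearMap.range f)

/-- An `R`-module is indecomposable if it is nonzero and its only idempotent endomorphisms
are `0` and the identity. -/
def IndecMod (R : Type) [Ring R] (M : Type) [AddCommGroup M] [Module R M] : Prop :=
  Nontrivial M ∧ ∀ f : M →ₗ[R] M, f ∘ₗ f = f → f = 0 ∨ f = LinearMap.id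

/-- A ring `R` is shod (for right modules over `Rᵒᵖ`, pass `Rᵒᵖ`) if every indecomposable
finitely generated module has projective dimension at most 1 or injective dimension at
most 1. -/
def Shod (R : Type) [Ring R] : Prop :=
  ∀ M : ModuleCat R, Module.Finite R M → IndecMod R M → (pdLE R 1 M ∨ idLE R 1 M)

section ScalarsViaSurjection

universe u

open Function Submodule

variable {R S : Type*} [Ring R] [Ring S] {ρ : R →+* S}

theorem LinearMap.exists_comp_eq_of_ker_le_s8 {N P T : Type*} [AddCommGroup N] [Module R N]
    [AddCommGroup P] [Module R P] [AddCommGroup T] [Module R T] {q : N →ₗ[R] P}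
    (hq : Surjective q) (f : N →ₗ[R] T) (h : LinearMap.ker q ≤ LinearMap.ker f) :
    ∃ g : P →ₗ[R] T, g ∘ₗ q = f :=
  ⟨(LinearMap.ker q).liftQ f h ∘ₗ (q.quotKerEquivOfSurjective hq).symm.toLinearMap, by
    ext n
    simp⟩

theorem Submodule.smul_mem_smul_of_forall_smul_mem {M : Type*} [AddCommGroup M] [Module R M]
    {J : Ideal R} (hJ : J ≤ J • J) {N : Submodule R M} {x : M} (hx : ∀ r ∈ J, r • x ∈ N)
    {r : R} (hr : r ∈ J) : r • x ∈ J • N := by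
  refine smul_induction_on (p := (· • x ∈ J • N)) (hJ hr) (fun a ha b hb => ?_) fun y z hy hz => ?_
  · rw [smul_eq_mul, mul_smul]
    exact smul_mem_smul ha (hx b hb)
  · rw [add_smul]
    exact add_mem hy hz

-- Mathlib's `Submodule.torsionBySet` is only defined over commutative rings.
def Submodule.torsionByIdeal (M : Type*) [AddCommGroup M] [Module R M] (J : Ideal R)
    [J.IsTwoSided] : Submodule R M where
  carrier := {x | ∀ r ∈ J, r • x = 0}
  add_mem' hx hy r hr := by rw [smul_add, hx r hr, hy r hr, add_zero]
  zero_mem' r _ := smul_zero r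
  smul_mem' c x hx r hr := by rw [← mul_smul, hx _ (J.mul_mem_right c hr)]

theorem Submodule.mem_torsionByIdeal_of_forall_smul_mem {M : Type*} [AddCommGroup M]
    [Module R M] {J : Ideal R} [J.IsTwoSided] (hJ : J ≤ J • J) {N : Submodule R M}
    (hN : J • N = ⊥) {x : M} (hx : ∀ r ∈ J, r • x ∈ N) : x ∈ torsionByIdeal M J := fun _ hr =>
  (mem_bot R).1 (hN ▸ smul_mem_smul_of_forall_smul_mem hJ hx hr)

variable {N₁ N₂ : Type*} [AddCommGroup N₁] [Module R N₁] [Module S N₁]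
  [AddCommGroup N₂] [Module R N₂] [Module S N₂]

variable (ρ) in
def LinearMap.restrictScalarsVia (h₁ : ∀ (r : R) (n : N₁), ρ r • n = r • n)
    (h₂ : ∀ (r : R) (n : N₂), ρ r • n = r • n) (f : N₁ →ₗ[S] N₂) : N₁ →ₗ[R] N₂ where
  toFun := f
  map_add' := f.map_add
  map_smul' r n := by rw [RingHom.id_apply, ← h₁, ← h₂, f.map_smul]

def LinearMap.extendScalarsVia (hρ : Surjective ρ) (h₁ : ∀ (r : R) (n : N₁), ρ r • n = r • n)
    (h₂ : ∀ (r : R) (n : N₂), ρ r • n = r • n) (f : N₁ →ₗ[R] N₂) : N₁ →ₗ[S] N₂ where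
  toFun := f
  map_add' := f.map_add
  map_smul' s n := by
    obtain ⟨r, rfl⟩ := hρ s
    rw [RingHom.id_apply, h₁, h₂, f.map_smul]

theorem smul_eq_smul_of_ringHom_eq {N : Type*} [AddCommGroup N] [Module R N]
    (hN : Module.IsTorsionBySet R N (RingHom.ker ρ)) {r r' : R} (h : ρ r = ρ r') (n : N) :
    r • n = r' • n := by
  rw [← sub_eq_zero, ← sub_smul]
  exact @hN n ⟨r - r', RingHom.mem_ker.2 (by rw [map_sub, h, sub_self])⟩

variable (hρ : Surjective ρ)
include hρ

theorem Module.Finite.of_surjective_ringHom {M : Type*} [AddCommGroup M] [Module R M]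
    [Module S M] (hM : ∀ (r : R) (m : M), ρ r • m = r • m) [Module.Finite S M] :
    Module.Finite R M := by
  obtain ⟨s, hs⟩ := Module.Finite.fg_top (R := S) (M := M)
  refine ⟨⟨s, eq_top_iff'.2 fun m => ?_⟩⟩
  have hm : m ∈ span S (s : Set M) := hs ▸ mem_top
  induction hm using span_induction with
  | mem x hx => exact subset_span hx
  | zero => exact zero_mem _
  | add x y _ _ hx hy => exact add_mem hx hy
  | smul c x _ hx =>
    obtain ⟨r, rfl⟩ := hρ c
    rw [hM]
    exact smul_mem _ r hx

noncomputable abbrev moduleOfKerSMul {N : Type*} [AddCommGroup N] [Module R N]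
    (hN : Module.IsTorsionBySet R N (RingHom.ker ρ)) : Module S N :=
  letI : SMul S N := ⟨fun s n => surjInv hρ s • n⟩
  hρ.moduleLeft ρ fun r => smul_eq_smul_of_ringHom_eq hN (surjInv_eq hρ (ρ r))

theorem ringHom_smul_moduleOfKerSMul {N : Type*} [AddCommGroup N] [Module R N]
    (hN : Module.IsTorsionBySet R N (RingHom.ker ρ)) (r : R) (n : N) :
    (letI := moduleOfKerSMul hρ hN; ρ r • n) = r • n :=
  smul_eq_smul_of_ringHom_eq hN (surjInv_eq hρ (ρ r)) n

theorem Module.Projective.of_surjective_of_ker_le {P T : Type*} [AddCommGroup P] [Module R P]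
    [Module.Projective R P] [AddCommGroup T] [Module R T] [Module S T]
    (hT : ∀ (r : R) (t : T), ρ r • t = r • t) (q : P →ₗ[R] T) (hq : Surjective q)
    (hker : LinearMap.ker q ≤ RingHom.ker ρ • ⊤) :
    Module.Projective S T := by
  refine .of_lifting_property'' fun f hf => ?_
  let _ : Module R (T →₀ S) := Module.compHom _ ρ
  obtain ⟨h, hh⟩ := Module.projective_lifting_property
    (f.restrictScalarsVia ρ (fun _ _ => rfl) hT) q hf
  have hkill : RingHom.ker ρ • ⊤ ≤ LinearMap.ker h := smul_le.2 fun r hr p _ => by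
    rw [LinearMap.mem_ker, map_smul, show r • h p = ρ r • h p from rfl, RingHom.mem_ker.1 hr,
      zero_smul]
  obtain ⟨g, rfl⟩ := LinearMap.exists_comp_eq_of_ker_le_s8 hq h (hker.trans hkill)
  refine ⟨g.extendScalarsVia hρ hT (fun _ _ => rfl), LinearMap.ext fun t => ?_⟩
  obtain ⟨p, rfl⟩ := hq t
  exact LinearMap.congr_fun hh p

theorem Module.Injective.of_injective_of_range {T I : Type u} [AddCommGroup T] [Module R T]
    [Module S T] (hT : ∀ (r : R) (t : T), ρ r • t = r • t) [AddCommGroup I] [Module R I]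
    [Module.Injective R I] (ι : T →ₗ[R] I) (hι : Function.Injective ι)
    (hrange : torsionByIdeal I (RingHom.ker ρ) ≤ LinearMap.range ι) :
    Module.Injective S T := by
  refine ⟨fun X Y _ _ _ _ f hf g => ?_⟩
  let _ : Module R X := Module.compHom X ρ
  let _ : Module R Y := Module.compHom Y ρ
  obtain ⟨h, hh⟩ := Module.Injective.out (f.restrictScalarsVia ρ (fun _ _ => rfl) fun _ _ => rfl)
    hf (ι ∘ₗ g.restrictScalarsVia ρ (fun _ _ => rfl) hT)
  have hmem (y : Y) : h y ∈ LinearMap.range ι := hrange fun r hr => by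
    rw [← map_smul, show r • y = ρ r • y from rfl, RingHom.mem_ker.1 hr, zero_smul, map_zero]
  let φ : Y →ₗ[R] T :=
    (LinearEquiv.ofInjective ι hι).symm.toLinearMap ∘ₗ LinearMap.codRestrict _ h hmem
  refine ⟨φ.extendScalarsVia hρ (fun _ _ => rfl) hT, fun x => hι ?_⟩
  exact (LinearEquiv.ofInjective_symm_apply (h := hι) ι _).trans (hh x)

end ScalarsViaSurjection

section IdempotentKernel

open Function Submodule

variable {R S : Type} [Ring R] [Ring S] {ρ : R →+* S} (hρ : Surjective ρ)
include hρ

theorem IndecMod.of_surjective_ringHom {M : Type} [AddCommGroup M] [Module R M] [Module S M]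
    (hM : ∀ (r : R) (m : M), ρ r • m = r • m) (h : IndecMod S M) : IndecMod R M := by
  refine ⟨h.1, fun f hf => ?_⟩
  refine (h.2 (f.extendScalarsVia hρ hM hM) (LinearMap.ext fun m => LinearMap.congr_fun hf m)).imp
    (fun h0 => ?_) fun h1 => ?_
  · exact LinearMap.ext fun m => LinearMap.congr_fun h0 m
  · exact LinearMap.ext fun m => LinearMap.congr_fun h1 m

variable (hJ : RingHom.ker ρ ≤ RingHom.ker ρ • RingHom.ker ρ)
include hJ

theorem pdLE_one_of_surjective_ringHom {M : Type} [AddCommGroup M] [Module R M] [Module S M]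
    (hM : ∀ (r : R) (m : M), ρ r • m = r • m) (h : pdLE R 1 M) : pdLE S 1 M := by
  obtain ⟨P, f, hP, hf, hK⟩ := h
  have hK : Module.Projective R (LinearMap.ker f) := hK
  set J := RingHom.ker ρ
  set JP : Submodule R P := J • ⊤
  have hJf : JP ≤ LinearMap.ker f := smul_le.2 fun r hr p _ => by
    rw [LinearMap.mem_ker, map_smul, ← hM, RingHom.mem_ker.1 hr, zero_smul]
  have hJQ := Module.isTorsionBySet_quotient_ideal_smul P J
  let _ := moduleOfKerSMul hρ hJQ
  have hQ := ringHom_smul_moduleOfKerSMul hρ hJQ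
  let f' : (P ⧸ JP) →ₗ[S] M := (JP.liftQ f hJf).extendScalarsVia hρ hQ hM
  let _ : Module R (LinearMap.ker f') := Module.compHom _ ρ
  let q : LinearMap.ker f →ₗ[R] LinearMap.ker f' :=
    { toFun k := ⟨JP.mkQ k, k.2⟩
      map_add' _ _ := rfl
      map_smul' r k := Subtype.ext (hQ r (JP.mkQ k)).symm }
  have hq : Surjective q := by
    rintro ⟨z, hz⟩
    obtain ⟨p, rfl⟩ := JP.mkQ_surjective z
    exact ⟨⟨p, hz⟩, rfl⟩
  have hJPK : JP ≤ (J • ⊤ : Submodule R (LinearMap.ker f)).map (LinearMap.ker f).subtype := by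
    rw [map_smul'', map_subtype_top]
    exact smul_le.2 fun r hr p _ => smul_mem_smul_of_forall_smul_mem hJ
      (fun r' hr' => hJf (smul_mem_smul hr' mem_top)) hr
  have hkerq : LinearMap.ker q ≤ J • ⊤ := fun k hk => by
    obtain ⟨k', hk', hkk'⟩ := hJPK ((Quotient.mk_eq_zero _).1 (congrArg Subtype.val hk))
    rwa [← Subtype.ext hkk']
  refine ⟨ModuleCat.of S (P ⧸ JP), f', ?_, fun m => (hf m).elim fun p hp => ⟨JP.mkQ p, hp⟩, ?_⟩
  · exact Module.Projective.of_surjective_of_ker_le hρ hQ _ JP.mkQ_surjective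
      (ker_mkQ _).le
  · exact Module.Projective.of_surjective_of_ker_le hρ (fun _ _ => rfl) q hq hkerq

theorem idLE_one_of_surjective_ringHom {M : Type} [AddCommGroup M] [Module R M] [Module S M]
    (hM : ∀ (r : R) (m : M), ρ r • m = r • m) (h : idLE R 1 M) : idLE S 1 M := by
  obtain ⟨I, g, hI, hg, hC⟩ := h
  have hC : Module.Injective R (I ⧸ LinearMap.range g) := hC
  set J := RingHom.ker ρ
  set I' := torsionByIdeal I J
  have hJI' : Module.IsTorsionBySet R I' J := fun x r => Subtype.ext (x.2 r r.2)
  let _ := moduleOfKerSMul hρ hJI'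
  have hI' := ringHom_smul_moduleOfKerSMul hρ hJI'
  have hJg : ∀ r ∈ J, ∀ m, r • g m = 0 := fun r hr m => by
    rw [← map_smul, ← hM, RingHom.mem_ker.1 hr, zero_smul, map_zero]
  let g' : M →ₗ[S] I' :=
    (LinearMap.codRestrict I' g fun m r hr => hJg r hr m).extendScalarsVia hρ hM hI'
  let _ : Module R (I' ⧸ LinearMap.range g') := Module.compHom _ ρ
  let mk : I' →ₗ[R] I' ⧸ LinearMap.range g' :=
    (LinearMap.range g').mkQ.restrictScalarsVia ρ hI' fun _ _ => rfl
  obtain ⟨ι, hι⟩ := LinearMap.exists_comp_eq_of_ker_le_s8 (LinearMap.range g').mkQ_surjective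
    ((LinearMap.range g).mkQ ∘ₗ I'.subtype) (q := mk) fun x hx => by
      obtain ⟨m, hm⟩ := (Quotient.mk_eq_zero _).1 hx
      exact (Quotient.mk_eq_zero _).2 ⟨m, congrArg Subtype.val hm⟩
  have hιinj : Function.Injective ι := by
    refine (injective_iff_map_eq_zero ι).2 fun d hd => ?_
    obtain ⟨x, rfl⟩ := (LinearMap.range g').mkQ_surjective d
    obtain ⟨m, hm⟩ := (Quotient.mk_eq_zero _).1 ((LinearMap.congr_fun hι x).symm.trans hd)
    exact (Quotient.mk_eq_zero _).2 ⟨m, Subtype.ext hm⟩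
  have hιrange : torsionByIdeal (I ⧸ LinearMap.range g) J ≤ LinearMap.range ι := by
    intro c hc
    obtain ⟨x, rfl⟩ := (LinearMap.range g).mkQ_surjective c
    have hJrange : J • LinearMap.range g = ⊥ := eq_bot_iff.2 <| smul_le.2 fun r hr _ ⟨m, hm⟩ => by
      rw [← hm, hJg r hr m]
      exact zero_mem _
    have hx : x ∈ I' := mem_torsionByIdeal_of_forall_smul_mem hJ hJrange fun r hr =>
      (Quotient.mk_eq_zero _).1 (hc r hr)
    exact ⟨mk ⟨x, hx⟩, LinearMap.congr_fun hι ⟨x, hx⟩⟩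
  refine ⟨ModuleCat.of S I', g', ?_, fun a b hab => hg (congrArg Subtype.val hab), ?_⟩
  · exact Module.Injective.of_injective_of_range hρ hI' I'.subtype I'.injective_subtype
      (range_subtype I').ge
  · exact Module.Injective.of_injective_of_range hρ (fun _ _ => rfl) ι hιinj hιrange

theorem Shod.of_surjective_ringHom (hshod : Shod R) : Shod S := fun M _ hind => by
  let _ : Module R M := Module.compHom M ρ
  have hM : ∀ (r : R) (m : M), ρ r • m = r • m := fun _ _ => rfl
  exact (hshod (ModuleCat.of R M) (Module.Finite.of_surjective_ringHom hρ hM)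
    (IndecMod.of_surjective_ringHom hρ hM hind)).imp
    (pdLE_one_of_surjective_ringHom hρ hJ hM) (idLE_one_of_surjective_ringHom hρ hJ hM)

end IdempotentKernel

theorem RingHom.ker_le_ker_smul_ker_of_idempotent {R S : Type*} [Ring R] [Ring S] {ρ : R →+* S}
    {ε : R} (hε : ε * ε = ε) (hρε : ρ ε = 0)
    (hker : ∀ x, ρ x = 0 → x ∈ AddSubgroup.closure {y | ∃ a b, y = a * ε * b}) :
    RingHom.ker ρ ≤ RingHom.ker ρ • RingHom.ker ρ := by
  refine fun x hx => (AddSubgroup.closure_le (K := (RingHom.ker ρ • RingHom.ker ρ).toAddSubgroup)).2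
    ?_ (hker x (RingHom.mem_ker.1 hx))
  rintro _ ⟨a, b, rfl⟩
  have h : a * ε * b = (a * ε) • (ε * b) := by rw [smul_eq_mul, ← mul_assoc, mul_assoc a ε ε, hε]
  rw [h]
  exact Submodule.smul_mem_smul (by simp [hρε]) (by simp [hρε])

theorem MulOpposite.op_mem_closure_mul_op_mul {A : Type*} [Ring A] {e z : A}
    (hz : z ∈ AddSubgroup.closure {y | ∃ a b, y = a * e * b}) :
    op z ∈ AddSubgroup.closure {y : Aᵐᵒᵖ | ∃ a b, y = a * op e * b} := by
  have h := AddSubgroup.mem_map_of_mem (opAddEquiv : A ≃+ Aᵐᵒᵖ).toAddMonoidHom hz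
  rw [AddMonoidHom.map_closure] at h
  refine AddSubgroup.closure_mono ?_ h
  rintro _ ⟨_, ⟨a, b, rfl⟩, rfl⟩
  exact ⟨op b, op a, by simp [mul_assoc]⟩

theorem stmt8_general (A B : Type) [Ring A]
    [Ring B] (π : A →+* B) (hπ : Function.Surjective π)
    (e : A) (he : e * e = e)
    (hker : ∀ x : A, π x = 0 ↔ x ∈ AddSubgroup.closure {y : A | ∃ a b : A, y = a * e * b})
    (hshod : Shod Aᵐᵒᵖ) :
    Shod Bᵐᵒᵖ := by
  have hρ : Function.Surjective π.op := fun y =>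
    (hπ y.unop).elim fun a ha => ⟨op a, congrArg op ha⟩
  have hπe : π e = 0 := (hker e).2 (AddSubgroup.subset_closure ⟨1, 1, by simp⟩)
  refine Shod.of_surjective_ringHom hρ ?_ hshod
  refine RingHom.ker_le_ker_smul_ker_of_idempotent (ε := op e) (by rw [← op_mul, he])
    (by simp [hπe]) fun x hx => ?_
  exact op_unop x ▸ op_mem_closure_mul_op_mul ((hker x.unop).1 ((op_eq_zero_iff _).1 hx))

/-- Let `A` be a finite-dimensional `k`-algebra which is shod (every
indecomposable finitely generated right `A`-module has projective or injective dimension at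
most one).  Then for any idempotent `e ∈ A`, the quotient `B = A/AeA` (encoded by a
surjective ring homomorphism with kernel the two-sided ideal generated by `e`) is shod. -/
theorem stmt8 (k A B : Type) [Field k] [Ring A] [Algebra k A] [FiniteDimensional k A]
    [Ring B] (π : A →+* B) (hπ : Function.Surjective π)
    (e : A) (he : e * e = e)
    (hker : ∀ x : A, π x = 0 ↔ x ∈ AddSubgroup.closure {y : A | ∃ a b : A, y = a * e * b})
    (hshod : Shod Aᵐᵒᵖ) :
    Shod Bᵐᵒᵖ :=
  stmt8_general A B π hπ e he hker hshod
end

section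
/- Let H be a hereditary abelian category and E ∈ H. Then the abelian subcategory E^⊥[0,1] = {X : Hom_H(E,X) = 0 = Ext¹_H(E,X)} is itself hereditary: for all X, Y in E^⊥[0,1], Ext²_{E^⊥[0,1]}(X, Y) = 0, where Ext² is computed by Yoneda 2-extensions inside the subcategory. -/
/-!
Factor the 2-extension through `M = ker b`, giving short exact sequences `0 → Y → E₁ → M → 0`
and `0 → M → E₂ → X → 0`. Their Yoneda product lies in `Ext²(X, Y) = 0`, so by the long exact
`Ext(X, -)` sequence the class of the second one lifts along `E₁ → M` to some
`x ∈ Ext¹(X, E₁)`. Completing `x` to a distinguished triangle `E₁ → Z → X → E₁[1]` in the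
derived category and mapping it to the triangle of `0 → M → E₂ → X → 0`, the functor `H⁰`
produces the extension `0 → E₁ → F → X → 0` together with `g : F ⟶ E₂`. Finally `F` lies in
`E^⊥[0,1]` because this subcategory is closed under extensions (long exact `Ext(E, -)` sequence).
-/

open CategoryTheory CategoryTheory.Limits CategoryTheory.Abelian

universe w v u

namespace DerivedCategory

open Pretriangulated

variable {C : Type u} [Category.{v} C] [Abelian C] [HasDerivedCategory.{w} C]

lemma shortExact_homologyFunctor_zero_of_distTriang {A B : C} {Z : DerivedCategory C}
    (u : (singleFunctor C 0).obj A ⟶ Z) (v : Z ⟶ (singleFunctor C 0).obj B)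
    (δ : (singleFunctor C 0).obj B ⟶ ((singleFunctor C 0).obj A)⟦(1 : ℤ)⟧)
    (hT : Triangle.mk u v δ ∈ distTriang _) :
    (ShortComplex.mk ((homologyFunctor C 0).map u) ((homologyFunctor C 0).map v) (by
      rw [← Functor.map_comp, show u ≫ v = 0 from comp_distTriang_mor_zero₁₂ _ hT,
        Functor.map_zero])).ShortExact where
  exact := HomologySequence.exact₂ _ hT 0
  mono_f := (HomologySequence.mono_homologyMap_mor₁_iff _ hT (-1) 0).2
    ((isZero_of_isGE ((singleFunctor C 0).obj B) 0 (-1) (by lia)).eq_of_src _ _)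
  epi_g := (HomologySequence.epi_homologyMap_mor₂_iff _ hT 0 1).2
    ((isZero_of_isLE ((singleFunctor C 0).obj A) 0 1 (by lia)).eq_of_tgt _ _)

end DerivedCategory

open DerivedCategory Pretriangulated in
lemma CategoryTheory.ShortComplex.ShortExact.exists_shortExact_hom_of_comp_mk₀_eq_extClass
    {C : Type u} [Category.{v} C] [Abelian C] [HasExt.{w} C]
    {S : ShortComplex C} (hS : S.ShortExact) {E₁ : C} (π : E₁ ⟶ S.X₁)
    (x : Ext S.X₃ E₁ 1) (hx : x.comp (Ext.mk₀ π) (add_zero 1) = hS.extClass) :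
    ∃ (F : C) (i : E₁ ⟶ F) (p : F ⟶ S.X₃) (w : i ≫ p = 0),
      (ShortComplex.mk i p w).ShortExact ∧ ∃ g : F ⟶ S.X₂, i ≫ g = π ≫ S.f ∧ g ≫ S.g = p := by
  let := HasDerivedCategory.standard C
  let ν := singleFunctorCompHomologyFunctorIso C 0
  have hδ : x.hom ≫ ((singleFunctor C 0).map π)⟦(1 : ℤ)⟧' = hS.singleδ := by
    simpa [Ext.comp_hom, ShiftedHom.comp_mk₀] using congrArg Ext.hom hx
  obtain ⟨Z, u, v, hT⟩ := distinguished_cocone_triangle₂ x.hom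
  obtain ⟨γ, hγu, hγv⟩ : ∃ γ : Z ⟶ (singleFunctor C 0).obj S.X₂,
      u ≫ γ = (singleFunctor C 0).map (π ≫ S.f) ∧ v = γ ≫ (singleFunctor C 0).map S.g := by
    obtain ⟨γ, hγu, hγv⟩ := complete_distinguished_triangle_morphism₂ _ _ hT
      hS.singleTriangle_distinguished ((singleFunctor C 0).map π) (𝟙 _)
      (hδ.trans (Category.id_comp _).symm)
    exact ⟨γ, by rw [Functor.map_comp]; exact hγu, (Category.comp_id _).symm.trans hγv⟩
  have huv : u ≫ v = 0 := comp_distTriang_mor_zero₁₂ _ hT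
  refine ⟨(DerivedCategory.homologyFunctor C 0).obj Z,
    ν.inv.app E₁ ≫ (DerivedCategory.homologyFunctor C 0).map u,
    (DerivedCategory.homologyFunctor C 0).map v ≫ ν.hom.app S.X₃,
    by simp only [Category.assoc, ← Functor.map_comp_assoc, huv, Functor.map_zero, zero_comp,
      comp_zero], ?_, (DerivedCategory.homologyFunctor C 0).map γ ≫ ν.hom.app S.X₂, ?_, ?_⟩
  · refine ShortComplex.shortExact_of_iso ?_
      (shortExact_homologyFunctor_zero_of_distTriang u v x.hom hT)
    exact ShortComplex.isoMk (ν.app E₁) (Iso.refl _) (ν.app S.X₃) (by simp) (by simp)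
  · rw [Category.assoc, ← Functor.map_comp_assoc, hγu]
    exact NatIso.naturality_1 ν (π ≫ S.f)
  · rw [Category.assoc, hγv, Functor.map_comp_assoc]
    exact congrArg _ (ν.hom.naturality S.g).symm

namespace CategoryTheory.ShortComplex

variable {C : Type u} [Category.{v} C] [Abelian C]

lemma shortExact_kernel_ι {E X : C} (b : E ⟶ X) [Epi b] :
    (ShortComplex.mk (kernel.ι b) b (kernel.condition b)).ShortExact :=
  ⟨exact_of_f_is_kernel _ (kernelIsKernel b)⟩

lemma Exact.shortExact_of_fac {Y E₁ M E₂ : C} {a : Y ⟶ E₁} {f : E₁ ⟶ E₂} {w₁ : a ≫ f = 0}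
    (h₁ : (ShortComplex.mk a f w₁).Exact) [Mono a] {π : E₁ ⟶ M} {m : M ⟶ E₂} [Epi π] [Mono m]
    (fac : π ≫ m = f) (w : a ≫ π = 0) : (ShortComplex.mk a π w).ShortExact where
  exact := (exact_iff_of_epi_of_isIso_of_mono (S₁ := ShortComplex.mk a π w)
    (S₂ := ShortComplex.mk a f w₁) { τ₁ := 𝟙 _, τ₂ := 𝟙 _, τ₃ := m }).2 h₁

variable {E : C}

lemma ShortExact.hom_eq_zero {S : ShortComplex C} (hS : S.ShortExact)
    (h₁ : ∀ g : E ⟶ S.X₁, g = 0) (h₃ : ∀ g : E ⟶ S.X₃, g = 0) (g : E ⟶ S.X₂) : g = 0 := by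
  have := hS.mono_f
  rw [← hS.exact.lift_f g (h₃ _), h₁ (hS.exact.lift g _), zero_comp]

lemma ShortExact.subsingleton_ext_X₂ [HasExt.{w} C] {S : ShortComplex C} (hS : S.ShortExact)
    {n : ℕ} [Subsingleton (Ext E S.X₁ n)] [Subsingleton (Ext E S.X₃ n)] :
    Subsingleton (Ext E S.X₂ n) := by
  refine subsingleton_of_forall_eq 0 fun ξ => ?_
  obtain ⟨η, rfl⟩ := Ext.covariant_sequence_exact₂ E hS ξ (Subsingleton.elim _ _)
  rw [Subsingleton.elim η 0, Ext.zero_comp]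

end CategoryTheory.ShortComplex

lemma exists_shortExact_splicing_of_subsingleton_ext_two
    {C : Type u} [Category.{v} C] [Abelian C] [HasExt.{w} C] {X Y E₁ E₂ : C}
    [Subsingleton (Ext X Y 2)]
    (a : Y ⟶ E₁) (f : E₁ ⟶ E₂) (b : E₂ ⟶ X) [Mono a] [Epi b]
    (w₁ : a ≫ f = 0) (w₂ : f ≫ b = 0)
    (h₁ : (ShortComplex.mk a f w₁).Exact) (h₂ : (ShortComplex.mk f b w₂).Exact) :
    ∃ (F : C) (i : E₁ ⟶ F) (p : F ⟶ X) (w : i ≫ p = 0),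
      (ShortComplex.mk i p w).ShortExact ∧ ∃ g : F ⟶ E₂, i ≫ g = f ∧ g ≫ b = p := by
  have : Epi (kernel.lift b f w₂) := (ShortComplex.exact_iff_epi_kernel_lift _).1 h₂
  have hS₁ := h₁.shortExact_of_fac (kernel.lift_ι b f w₂)
    (by rw [← cancel_mono (kernel.ι b), Category.assoc, kernel.lift_ι, w₁, zero_comp])
  have hS₂ := ShortComplex.shortExact_kernel_ι b
  obtain ⟨x, hx⟩ := Ext.covariant_sequence_exact₃ X hS₁ hS₂.extClass rfl (Subsingleton.elim _ _)
  obtain ⟨F, i, p, w, hF, g, hig, hgb⟩ :=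
    hS₂.exists_shortExact_hom_of_comp_mk₀_eq_extClass _ x hx
  exact ⟨F, i, p, w, hF, g, hig.trans (kernel.lift_ι _ _ _), hgb⟩

theorem stmt10_general (H : Type) [Category H] [Abelian H]
    [HasExt.{0} H]
    (hered : ∀ X Y : H, Subsingleton (Ext X Y 2))
    (E : H)
    (X Y E₁ E₂ : H)
    (hX : (∀ g : E ⟶ X, g = 0) ∧ Subsingleton (Ext E X 1))
    (hE₁ : (∀ g : E ⟶ E₁, g = 0) ∧ Subsingleton (Ext E E₁ 1))
    -- an exact sequence `0 → Y → E₁ → E₂ → X → 0`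
    (a : Y ⟶ E₁) (f : E₁ ⟶ E₂) (b : E₂ ⟶ X) [Mono a] [Epi b]
    (w₁ : a ≫ f = 0) (w₂ : f ≫ b = 0)
    (h₁ : (ShortComplex.mk a f w₁).Exact) (h₂ : (ShortComplex.mk f b w₂).Exact) :
    ∃ (F : H), ((∀ g : E ⟶ F, g = 0) ∧ Subsingleton (Ext E F 1)) ∧
      ∃ (i : E₁ ⟶ F) (p : F ⟶ X) (w : i ≫ p = 0),
        (ShortComplex.mk i p w).ShortExact ∧
        ∃ g : F ⟶ E₂, i ≫ g = f ∧ g ≫ b = p := by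
  have := hered X Y
  obtain ⟨F, i, p, w, hF, g, hig, hgb⟩ :=
    exists_shortExact_splicing_of_subsingleton_ext_two a f b w₁ w₂ h₁ h₂
  have := hE₁.2
  have := hX.2
  exact ⟨F, ⟨hF.hom_eq_zero hE₁.1 hX.1, hF.subsingleton_ext_X₂⟩, i, p, w, hF, g, hig, hgb⟩

/-- Let `H` be a hereditary abelian category (`Ext²` vanishes identically)
and `E ∈ H`.  Then the abelian subcategory `E^⊥[0,1]` is itself hereditary: every Yoneda
2-extension `0 → Y → E₁ → E₂ → X → 0` with all terms in `E^⊥[0,1]` is trivial inside the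
subcategory, i.e. there exist `F ∈ E^⊥[0,1]`, a short exact sequence `0 → E₁ → F → X → 0`
and a morphism `g : F ⟶ E₂` splicing the given 2-extension trivially. -/
theorem stmt10 (k : Type) [Field k] (H : Type) [Category H] [Abelian H] [Linear k H]
    [HasExt.{0} H]
    (hfin : ∀ X Y : H, Module.Finite k (X ⟶ Y))
    (hered : ∀ X Y : H, Subsingleton (Ext X Y 2))
    (E : H)
    (X Y E₁ E₂ : H)
    (hX : (∀ g : E ⟶ X, g = 0) ∧ Subsingleton (Ext E X 1))
    (hY : (∀ g : E ⟶ Y, g = 0) ∧ Subsingleton (Ext E Y 1))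
    (hE₁ : (∀ g : E ⟶ E₁, g = 0) ∧ Subsingleton (Ext E E₁ 1))
    (hE₂ : (∀ g : E ⟶ E₂, g = 0) ∧ Subsingleton (Ext E E₂ 1))
    -- an exact sequence `0 → Y → E₁ → E₂ → X → 0`
    (a : Y ⟶ E₁) (f : E₁ ⟶ E₂) (b : E₂ ⟶ X) [Mono a] [Epi b]
    (w₁ : a ≫ f = 0) (w₂ : f ≫ b = 0)
    (h₁ : (ShortComplex.mk a f w₁).Exact) (h₂ : (ShortComplex.mk f b w₂).Exact) :
    ∃ (F : H), ((∀ g : E ⟶ F, g = 0) ∧ Subsingleton (Ext E F 1)) ∧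
      ∃ (i : E₁ ⟶ F) (p : F ⟶ X) (w : i ≫ p = 0),
        (ShortComplex.mk i p w).ShortExact ∧
        ∃ g : F ⟶ E₂, i ≫ g = f ∧ g ≫ b = p :=
  stmt10_general H hered E X Y E₁ E₂ hX hE₁ a f b w₁ w₂ h₁ h₂
end

section
/- Let T be a triangulated category and X, Y full subcategories. If X and Y are both contravariantly finite in T, then the extension category X * Y is contravariantly finite in T. -/
open CategoryTheory CategoryTheory.Limits CategoryTheory.Pretriangulated

/-!
Let `p : X₀ ⟶ Z` be a right `P`-approximation with cone `X₀ ⟶ Z ⟶ W ⟶ X₀⟦1⟧`, and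
`q : Y₀ ⟶ W` a right `Q`-approximation. The cocone `E` of `q ≫ δ : Y₀ ⟶ X₀⟦1⟧` lies in `P * Q`
and maps to `Z` by a morphism of triangles. For `g : E' ⟶ Z` with `X' ⟶ E' ⟶ Y' ⟶ X'⟦1⟧`,
`X' ∈ P`, `Y' ∈ Q`: the restriction `X' ⟶ Z` factors through `p`, so `E' ⟶ Z ⟶ W` factors
through `Y'` and then through `q`. The resulting `Y' ⟶ Y₀` extends to a morphism of triangles
`E' ⟶ E`, which lifts `g` modulo maps factoring through `p`; these lift through `X₀ ⟶ E`.
-/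

namespace CategoryTheory

namespace ObjectProperty

variable {C : Type*} [Category C]

def IsRightApproximation (P : ObjectProperty C) {X Z : C} (f : X ⟶ Z) : Prop :=
  P X ∧ ∀ X' : C, P X' → ∀ g : X' ⟶ Z, ∃ h : X' ⟶ X, h ≫ f = g

def IsContravariantlyFinite (P : ObjectProperty C) : Prop :=
  ∀ Z : C, ∃ (X : C) (f : X ⟶ Z), P.IsRightApproximation f

end ObjectProperty

namespace Pretriangulated

variable {C : Type*} [Category C] [Preadditive C] [HasZeroObject C] [HasShift C ℤ]
  [∀ n : ℤ, (shiftFunctor C n).Additive] [Pretriangulated C]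

variable {X₁ X₂ X₃ Y₁ Y₂ Y₃ : C} {u₁ : X₁ ⟶ X₂} {v₁ : X₂ ⟶ X₃} {w₁ : X₃ ⟶ X₁⟦(1 : ℤ)⟧}
  {u₂ : Y₁ ⟶ Y₂} {v₂ : Y₂ ⟶ Y₃} {w₂ : Y₃ ⟶ Y₁⟦(1 : ℤ)⟧}

lemma exists_comp_eq_comp_of_comp_comp_eq_zero
    (hT₁ : Triangle.mk u₁ v₁ w₁ ∈ distTriang C) (hT₂ : Triangle.mk u₂ v₂ w₂ ∈ distTriang C)
    (d : X₃ ⟶ Y₃) (hd : v₁ ≫ d ≫ w₂ = 0) : ∃ h : X₂ ⟶ Y₂, v₁ ≫ d = h ≫ v₂ := by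
  obtain ⟨s, hs⟩ : ∃ s : X₁⟦(1 : ℤ)⟧ ⟶ Y₁⟦(1 : ℤ)⟧, d ≫ w₂ = w₁ ≫ s :=
    Triangle.yoneda_exact₃ _ hT₁ _ hd
  obtain ⟨a, rfl⟩ := (shiftFunctor C (1 : ℤ)).map_surjective s
  obtain ⟨h, -, hh⟩ := complete_distinguished_triangle_morphism₂ _ _ hT₁ hT₂ a d hs.symm
  exact ⟨h, hh⟩

lemma exists_comp_eq_of_comp_comp_eq (hT₂ : Triangle.mk u₂ v₂ w₂ ∈ distTriang C)
    {E W : C} {e : E ⟶ Y₂} {u : Y₁ ⟶ E} (hu : u ≫ e = u₂) {g : W ⟶ Y₂}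
    (h : W ⟶ E) (hg : h ≫ e ≫ v₂ = g ≫ v₂) : ∃ h' : W ⟶ E, h' ≫ e = g := by
  obtain ⟨x, hx⟩ : ∃ x : W ⟶ Y₁, h ≫ e - g = x ≫ u₂ := Triangle.coyoneda_exact₂ _ hT₂ _
    (show (h ≫ e - g) ≫ v₂ = 0 by rw [Preadditive.sub_comp, Category.assoc, hg, sub_self])
  refine ⟨h - x ≫ u, ?_⟩
  rw [Preadditive.sub_comp, Category.assoc, hu, ← hx]
  abel

end Pretriangulated

namespace ObjectProperty

variable {C : Type*} [Category C] [Preadditive C] [HasZeroObject C] [HasShift C ℤ]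
  [∀ n : ℤ, (shiftFunctor C n).Additive] [Pretriangulated C] {P Q : ObjectProperty C}

theorem IsRightApproximation.extensionProduct {X₀ Y₀ Z W E : C} {p : X₀ ⟶ Z} {c : Z ⟶ W}
    {δ : W ⟶ X₀⟦(1 : ℤ)⟧} (hT : Triangle.mk p c δ ∈ distTriang C)
    (hp : P.IsRightApproximation p) {q : Y₀ ⟶ W} (hq : Q.IsRightApproximation q)
    {u : X₀ ⟶ E} {v : E ⟶ Y₀} (hE : Triangle.mk u v (q ≫ δ) ∈ distTriang C) {e : E ⟶ Z}
    (hu : u ≫ e = p) (hv : v ≫ q = e ≫ c) :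
    (P.extensionProduct Q).IsRightApproximation e := by
  refine ⟨⟨X₀, Y₀, u, v, q ≫ δ, hE, hp.1, hq.1⟩, ?_⟩
  rintro E' ⟨X', Y', u', v', w', hT', hX', hY'⟩ g
  obtain ⟨a, ha⟩ := hp.2 X' hX' (u' ≫ g)
  obtain ⟨b, hb, -⟩ : ∃ b : Y' ⟶ W, v' ≫ b = g ≫ c ∧ w' ≫ a⟦(1 : ℤ)⟧' = b ≫ δ :=
    complete_distinguished_triangle_morphism _ _ hT' hT a g ha.symm
  obtain ⟨d, rfl⟩ := hq.2 Y' hY' b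
  have hcδ : c ≫ δ = 0 := comp_distTriang_mor_zero₂₃ _ hT
  obtain ⟨h, hh⟩ := exists_comp_eq_comp_of_comp_comp_eq_zero hT' hE d (by
    rw [← Category.assoc d, ← Category.assoc, hb, Category.assoc, hcδ, comp_zero])
  refine exists_comp_eq_of_comp_comp_eq hT hu h ?_
  rw [← hv, ← Category.assoc, ← hh, ← hb, Category.assoc]

theorem IsContravariantlyFinite.extensionProduct (hP : P.IsContravariantlyFinite)
    (hQ : Q.IsContravariantlyFinite) : (P.extensionProduct Q).IsContravariantlyFinite := by
  intro Z
  obtain ⟨X₀, p, hp⟩ := hP Z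
  obtain ⟨W, c, δ, hT⟩ := distinguished_cocone_triangle p
  obtain ⟨Y₀, q, hq⟩ := hQ W
  obtain ⟨E, u, v, hE⟩ := distinguished_cocone_triangle₂ (q ≫ δ)
  obtain ⟨e, hu, hv⟩ : ∃ e : E ⟶ Z, u ≫ e = 𝟙 X₀ ≫ p ∧ v ≫ q = e ≫ c :=
    complete_distinguished_triangle_morphism₂ _ _ hE hT (𝟙 X₀) q
      (show (q ≫ δ) ≫ (𝟙 X₀)⟦(1 : ℤ)⟧' = q ≫ δ by rw [Functor.map_id, Category.comp_id])
  exact ⟨E, e, hp.extensionProduct hT hq hE (by rwa [Category.id_comp] at hu) hv⟩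

end ObjectProperty

end CategoryTheory

/-- Let `T` be a triangulated category and `X`, `Y` full subcategories
(given by predicates `P`, `Q`).  If `P` and `Q` are contravariantly finite in `T`, then the
extension subcategory `P * Q` (objects `E` admitting a distinguished triangle
`X → E → Y → X[1]` with `X ∈ P`, `Y ∈ Q`) is contravariantly finite in `T`. -/
theorem stmt16 (T : Type) [Category T] [Preadditive T] [HasZeroObject T]
    [HasShift T ℤ] [∀ n : ℤ, (CategoryTheory.shiftFunctor T n).Additive] [Pretriangulated T]
    (P Q : T → Prop)
    (hP : ∀ Z : T, ∃ (X : T) (f : X ⟶ Z), P X ∧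
      ∀ (X' : T), P X' → ∀ g : X' ⟶ Z, ∃ h : X' ⟶ X, h ≫ f = g)
    (hQ : ∀ Z : T, ∃ (X : T) (f : X ⟶ Z), Q X ∧
      ∀ (X' : T), Q X' → ∀ g : X' ⟶ Z, ∃ h : X' ⟶ X, h ≫ f = g) :
    ∀ Z : T, ∃ (E : T) (f : E ⟶ Z),
      -- `E ∈ P * Q`
      (∃ (X Y : T) (u : X ⟶ E) (v : E ⟶ Y) (w : Y ⟶ X⟦(1 : ℤ)⟧),
        (Triangle.mk u v w ∈ distTriang T) ∧ P X ∧ Q Y) ∧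
      -- `f` is a right `P * Q`-approximation of `Z`
      (∀ E' : T,
        (∃ (X Y : T) (u : X ⟶ E') (v : E' ⟶ Y) (w : Y ⟶ X⟦(1 : ℤ)⟧),
          (Triangle.mk u v w ∈ distTriang T) ∧ P X ∧ Q Y) →
        ∀ g : E' ⟶ Z, ∃ h : E' ⟶ E, h ≫ f = g) :=
  ObjectProperty.IsContravariantlyFinite.extensionProduct (P := P) (Q := Q) hP hQ
end
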